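/- arXiv:1805.05072 — 2 statements merged into one kernel-verified Lean document; each statement's English description precedes it below -/
import Mathlib

section
/- For real numbers ρ_in, ρ_out > 0 and θ_in, θ_out > 0, the inequality -[[ρ]]·([[log θ]] + θ̄·[[1/θ]]) ≤ -(1/2)|[[ρ]]|·[[θ]]·[[1/θ]] holds, where jumps and averages are as usual ([[q]] = q_out - q_in, q̄ = (q_in + q_out)/2). -/
lemma key_log_bound (x : ℝ) (hx : 0 < x) :
    |Real.log x - (x - 1/x)/2| ≤ (x + 1/x - 2)/2 := by
  have h1 := Real.log_le_sub_one_of_pos hx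
  have h2 := Real.log_le_sub_one_of_pos (one_div_pos.mpr hx)
  rw [Real.log_div one_ne_zero hx.ne', Real.log_one] at h2
  rw [abs_le]
  constructor <;> linarith

theorem stmt_7 (ρi ρo θi θo : ℝ) (hρi : 0 < ρi) (hρo : 0 < ρo)
    (hθi : 0 < θi) (hθo : 0 < θo) :
    -((ρo - ρi) * ((Real.log θo - Real.log θi) + ((θi + θo)/2) * (1/θo - 1/θi)))
      ≤ -((1/2) * |ρo - ρi| * (θo - θi) * (1/θo - 1/θi)) := by
  set t := θo/θi with ht
  have htpos : 0 < t := div_pos hθo hθi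
  have hlog : Real.log θo - Real.log θi = Real.log t := (Real.log_div hθo.ne' hθi.ne').symm
  have h1 : ((θi+θo)/2) * (1/θo - 1/θi) = -((t - 1/t)/2) := by
    rw [ht]; field_simp; ring
  have h2 : (θo - θi) * (1/θo - 1/θi) = -(t + 1/t - 2) := by
    rw [ht]; field_simp; ring
  have key := key_log_bound t htpos
  have hb : |(ρo - ρi) * (Real.log t - (t - 1/t)/2)| ≤ |ρo - ρi| * ((t+1/t-2)/2) := by
    rw [abs_mul]
    exact mul_le_mul_of_nonneg_left key (abs_nonneg _)
  have hneg := neg_abs_le ((ρo - ρi) * (Real.log t - (t - 1/t)/2))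
  rw [hlog, h1]
  nlinarith [h2, abs_nonneg (ρo - ρi)]
end

section
/- The function (ρ, p) ↦ -ρ·χ((1/(γ-1))·log(p/ρ^γ)) is convex on the set {ρ > 0, p > 0}, whenever χ: R → R is non-decreasing, concave, and twice continuously differentiable, and γ > 1. -/
open Real Set

private lemma combo_pos {a b x y : ℝ} (ha : 0 ≤ a) (hb : 0 ≤ b) (hab : a + b = 1)
    (hx : 0 < x) (hy : 0 < y) : 0 < a * x + b * y := by
  rcases eq_or_lt_of_le ha with h | h
  · have hb1 : b = 1 := by linarith
    simp [← h, hb1, hy]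
  · nlinarith [mul_nonneg hb hy.le]

private lemma concaveOn_congr' {S : Set (ℝ × ℝ)} {f g : ℝ × ℝ → ℝ} (hf : ConcaveOn ℝ S f)
    (h : ∀ x ∈ S, f x = g x) : ConcaveOn ℝ S g := by
  refine ⟨hf.1, fun x hx y hy a b ha hb hab => ?_⟩
  rw [← h _ hx, ← h _ hy, ← h _ (hf.1 hx hy ha hb hab)]
  exact hf.2 hx hy ha hb hab

private lemma convexOn_congr' {S : Set (ℝ × ℝ)} {f g : ℝ × ℝ → ℝ} (hf : ConvexOn ℝ S f)
    (h : ∀ x ∈ S, f x = g x) : ConvexOn ℝ S g := by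
  refine ⟨hf.1, fun x hx y hy a b ha hb hab => ?_⟩
  rw [← h _ hx, ← h _ hy, ← h _ (hf.1 hx hy ha hb hab)]
  exact hf.2 hx hy ha hb hab

/-- Perspective of a concave function is concave. -/
private lemma persp {D : Set ℝ} {φ : ℝ → ℝ} (hφ : ConcaveOn ℝ D φ)
    {S : Set (ℝ × ℝ)} (hS : Convex ℝ S) (hS1 : ∀ x ∈ S, 0 < x.1)
    (hS2 : ∀ x ∈ S, x.2 / x.1 ∈ D) :
    ConcaveOn ℝ S (fun x => x.1 * φ (x.2 / x.1)) := by
  refine ⟨hS, fun x hx y hy a b ha hb hab => ?_⟩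
  have hx1 := hS1 x hx
  have hy1 := hS1 y hy
  have hρ : 0 < a * x.1 + b * y.1 := combo_pos ha hb hab hx1 hy1
  have hw1 : 0 ≤ a * x.1 / (a * x.1 + b * y.1) := by positivity
  have hw2 : 0 ≤ b * y.1 / (a * x.1 + b * y.1) := by positivity
  have hwsum : a * x.1 / (a * x.1 + b * y.1) + b * y.1 / (a * x.1 + b * y.1) = 1 := by
    field_simp
  have key := hφ.2 (hS2 x hx) (hS2 y hy) hw1 hw2 hwsum
  simp only [smul_eq_mul] at key
  have harg : a * x.1 / (a * x.1 + b * y.1) * (x.2 / x.1)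
      + b * y.1 / (a * x.1 + b * y.1) * (y.2 / y.1)
      = (a * x.2 + b * y.2) / (a * x.1 + b * y.1) := by
    field_simp
  rw [harg] at key
  have key2 := mul_le_mul_of_nonneg_left key hρ.le
  have e1 : (a * x.1 + b * y.1) * (a * x.1 / (a * x.1 + b * y.1) * φ (x.2 / x.1)
      + b * y.1 / (a * x.1 + b * y.1) * φ (y.2 / y.1))
      = a * (x.1 * φ (x.2 / x.1)) + b * (y.1 * φ (y.2 / y.1)) := by
    field_simp
  rw [e1] at key2
  simpa [Prod.smul_fst, Prod.smul_snd, smul_eq_mul] using key2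

private lemma g_concave {γ : ℝ} (hγ : 1 < γ) :
    ConcaveOn ℝ {x : ℝ × ℝ | 0 < x.1 ∧ 0 < x.2}
      (fun x => x.1 * Real.log (x.2 / x.1 ^ γ)) := by
  have hSconv : Convex ℝ {x : ℝ × ℝ | 0 < x.1 ∧ 0 < x.2} := by
    intro x hx y hy a b ha hb hab
    exact ⟨combo_pos ha hb hab hx.1 hy.1, combo_pos ha hb hab hx.2 hy.2⟩
  have hF1 : ConcaveOn ℝ {x : ℝ × ℝ | 0 < x.1 ∧ 0 < x.2}
      (fun x => x.1 * Real.log (x.2 / x.1)) :=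
    persp strictConcaveOn_log_Ioi.concaveOn hSconv (fun x hx => hx.1)
      (fun x hx => div_pos hx.2 hx.1)
  have hc : ConvexOn ℝ {x : ℝ × ℝ | 0 < x.1 ∧ 0 < x.2}
      (fun x : ℝ × ℝ => x.1 * Real.log x.1) :=
    (Real.convexOn_mul_log.comp_linearMap (LinearMap.fst ℝ ℝ ℝ)).subset
      (fun x hx => le_of_lt hx.1) hSconv
  have hc2 : ConcaveOn ℝ {x : ℝ × ℝ | 0 < x.1 ∧ 0 < x.2}
      (fun x : ℝ × ℝ => -((γ - 1) * (x.1 * Real.log x.1))) := by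
    have h0 := (hc.smul (by linarith : (0:ℝ) ≤ γ - 1)).neg
    exact concaveOn_congr' h0 (fun x _ => by simp [smul_eq_mul])
  refine concaveOn_congr' (hF1.add hc2) (fun x hx => ?_)
  have hx1 := hx.1
  have hx2 := hx.2
  simp only [Pi.add_apply]
  rw [Real.log_div hx2.ne' hx1.ne', Real.log_div hx2.ne' (Real.rpow_pos_of_pos hx1 γ).ne',
    Real.log_rpow hx1]
  ring

theorem stmt_8 (γ : ℝ) (hγ : 1 < γ) (χ : ℝ → ℝ)
    (hmono : Monotone χ) (hconc : ConcaveOn ℝ Set.univ χ)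
    (hC2 : ContDiff ℝ 2 χ) :
    ConvexOn ℝ {x : ℝ × ℝ | 0 < x.1 ∧ 0 < x.2}
      (fun x => -x.1 * χ ((1/(γ - 1)) * Real.log (x.2 / x.1 ^ γ))) := by
  have hγ1 : (0:ℝ) < γ - 1 := by linarith
  set c : ℝ := 1/(γ - 1) with hc_def
  have hc : 0 < c := by positivity
  have hSconv : Convex ℝ {x : ℝ × ℝ | 0 < x.1 ∧ 0 < x.2} := by
    intro x hx y hy a b ha hb hab
    exact ⟨combo_pos ha hb hab hx.1 hy.1, combo_pos ha hb hab hx.2 hy.2⟩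
  -- concavity of u ↦ χ (c * u)
  have hχc : ConcaveOn ℝ (univ : Set ℝ) (fun u => χ (c * u)) := by
    refine ⟨convex_univ, fun x _ y _ a b ha hb hab => ?_⟩
    have := hconc.2 (mem_univ (c * x)) (mem_univ (c * y)) ha hb hab
    simp only [smul_eq_mul] at this ⊢
    rw [show c * (a * x + b * y) = a * (c * x) + b * (c * y) from by ring]
    exact this
  -- the perspective of it
  have hPconv : Convex ℝ {x : ℝ × ℝ | 0 < x.1} := by
    intro x hx y hy a b ha hb hab
    exact combo_pos ha hb hab hx hy
  have hP : ConcaveOn ℝ {x : ℝ × ℝ | 0 < x.1} (fun x => x.1 * χ (c * (x.2 / x.1))) :=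
    persp hχc hPconv (fun x hx => hx) (fun x _ => mem_univ _)
  have hg := g_concave hγ
  set g : ℝ × ℝ → ℝ := fun x => x.1 * Real.log (x.2 / x.1 ^ γ) with hg_def
  have hF : ConcaveOn ℝ {x : ℝ × ℝ | 0 < x.1 ∧ 0 < x.2}
      (fun x => x.1 * χ (c * Real.log (x.2 / x.1 ^ γ))) := by
    refine ⟨hSconv, fun x hx y hy a b ha hb hab => ?_⟩
    have hx1 := hx.1
    have hy1 := hy.1
    have hρ : 0 < a * x.1 + b * y.1 := combo_pos ha hb hab hx1 hy1
    have hgle := hg.2 hx hy ha hb hab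
    simp only [smul_eq_mul] at hgle
    have hP2 := hP.2 (show ((x.1, g x) : ℝ × ℝ) ∈ {x : ℝ × ℝ | 0 < x.1} from hx1)
      (show ((y.1, g y) : ℝ × ℝ) ∈ {x : ℝ × ℝ | 0 < x.1} from hy1) ha hb hab
    simp only [smul_eq_mul, Prod.mk.injEq, Prod.smul_mk, Prod.mk_add_mk] at hP2
    -- rewrite g x / x.1 = log (...)
    have ex : g x / x.1 = Real.log (x.2 / x.1 ^ γ) := by
      rw [hg_def]; field_simp
    have ey : g y / y.1 = Real.log (y.2 / y.1 ^ γ) := by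
      rw [hg_def]; field_simp
    rw [ex, ey] at hP2
    have hmstep : (a * x.1 + b * y.1) * χ (c * ((a * g x + b * g y) / (a * x.1 + b * y.1)))
        ≤ (a * x.1 + b * y.1) * χ (c * (g (a • x + b • y) / (a * x.1 + b * y.1))) := by
      apply mul_le_mul_of_nonneg_left _ hρ.le
      apply hmono
      gcongr
    have ez : g (a • x + b • y) / (a * x.1 + b * y.1)
        = Real.log ((a • x + b • y).2 / (a • x + b • y).1 ^ γ) := by
      rw [hg_def]
      simp only [Prod.smul_fst, Prod.smul_snd, Prod.fst_add, Prod.snd_add, smul_eq_mul]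
      exact mul_div_cancel_left₀ _ hρ.ne'
    rw [ez] at hmstep
    simp only [smul_eq_mul, Prod.smul_fst, Prod.smul_snd, Prod.fst_add, Prod.snd_add] at hmstep ⊢
    calc a * (x.1 * χ (c * Real.log (x.2 / x.1 ^ γ)))
          + b * (y.1 * χ (c * Real.log (y.2 / y.1 ^ γ)))
        ≤ (a * x.1 + b * y.1) * χ (c * ((a * g x + b * g y) / (a * x.1 + b * y.1))) := hP2
      _ ≤ _ := hmstep
  exact convexOn_congr' hF.neg (fun x _ => by simp [neg_mul])
end
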